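/- For a, b ∈ F_q not both zero, the Salié sum S(a,b) = Σ_{s ∈ F_q^*} χ(as + b/s) η(s) satisfies |S(a,b)| ≤ 2√q. -/

import Mathlib

open Finset

/-- The canonical additive character of a finite field `F` of characteristic `p`. -/
noncomputable def canonicalChar (p : ℕ) [Fact p.Prime] (F : Type*) [Field F] [Fintype F]
    [Algebra (ZMod p) F] (a : F) : ℂ :=
  Complex.exp (2 * Real.pi * Complex.I * ((Algebra.trace (ZMod p) F a).val : ℂ) / p)

open scoped Classical in
/-- The quadratic character `η` of `F_q^*`, extended by `0` to all of `F_q`: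
`η(a) = 1` if `a` is a nonzero square, `-1` if `a` is a nonsquare. -/
noncomputable def quadChar (F : Type*) [Field F] [Fintype F] (a : F) : ℂ :=
  if a = 0 then 0 else if IsSquare a then 1 else -1

/-!
For `ab ≠ 0` the substitution `s ↦ t / a` gives `S(a, b) = η(a) S(1, ab)`, and `s ↦ c / s` gives
`S(1, c) = η(c) S(1, c)`, so `S(1, c) = 0` when `c` is a nonsquare. For `c = v²` with `v ≠ 0`,
group the terms by `y = t + v²/t`: on that fibre `(t ± v)² = t (y ± 2v)`, so `η(t) = η(y ± 2v)`,
while completing the square shows the fibre has `1 + η(y² - 4v²)` elements. Hence the fibre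
contributes `η(y + 2v) + η(y - 2v)`, and shifting `y` gives the Salié evaluation
`S(1, v²) = (ψ(2v) + ψ(-2v)) g(η, ψ)`. Everything is then bounded by `2 |g(η, ψ)| = 2 √q`,
and `S(0, b) = S(b, 0) = η(b) g(η, ψ)`.
-/

theorem sum_mulChar_add_mul_addChar {A R : Type*} [CommRing A] [Fintype A] [CommRing R]
    (η : MulChar A R) (ψ : AddChar A R) (c : A) :
    ∑ y, η (y + c) * ψ y = ψ (-c) * gaussSum η ψ := by
  rw [gaussSum, mul_sum]
  refine Fintype.sum_equiv (Equiv.addRight c) _ _ fun y => ?_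
  rw [Equiv.coe_addRight, mul_left_comm, mul_comm (ψ _), ← AddChar.map_add_eq_mul,
    add_neg_cancel_right]

section SalieSum
variable {F R : Type*} [Field F] [Fintype F] [CommRing R]

/-- The term `s = 0` is `η 0 * ψ (b / 0) = 0` as soon as `R` is nontrivial. -/
def salieSum (η : MulChar F R) (ψ : AddChar F R) (a b : F) : R :=
  ∑ s, η s * ψ (a * s + b / s)

variable (η : MulChar F R) (ψ : AddChar F R)

theorem salieSum_one_zero : salieSum η ψ 1 0 = gaussSum η ψ := by
  simp [salieSum, gaussSum]

theorem salieSum_eq_mul_salieSum_one {a : F} (ha : a ≠ 0) (b : F) :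
    salieSum η ψ a b = η a⁻¹ * salieSum η ψ 1 (a * b) := by
  rw [salieSum, salieSum, mul_sum]
  refine Fintype.sum_equiv (Equiv.mulLeft₀ a ha) _ _ fun s => ?_
  rw [Equiv.mulLeft₀_apply, one_mul, mul_div_mul_left _ _ ha, ← mul_assoc, ← map_mul,
    inv_mul_cancel_left₀ ha]

variable {η}

theorem salieSum_comm (hη : η.IsQuadratic) (a b : F) : salieSum η ψ a b = salieSum η ψ b a := by
  refine Fintype.sum_equiv (Equiv.inv F) _ _ fun s => ?_
  rw [Equiv.inv_apply, ← MulChar.inv_apply', hη.inv, div_inv_eq_mul, div_eq_mul_inv, add_comm,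
    mul_comm a, mul_comm b]

theorem salieSum_one_eq_mul_self (hη : η.IsQuadratic) {c : F} (hc : c ≠ 0) :
    salieSum η ψ 1 c = η c * salieSum η ψ 1 c := by
  conv_rhs => rw [salieSum, mul_sum]
  refine (Fintype.sum_equiv (Equiv.divLeft₀ c hc) _ _ fun s => ?_).symm
  rw [Equiv.divLeft₀_apply, div_div_cancel₀ hc, div_eq_mul_inv c s, map_mul,
    ← MulChar.inv_apply', hη.inv, one_mul, one_mul, add_comm, mul_assoc]

end SalieSum

section QuadraticChar
variable {F : Type*} [Field F] [Fintype F] [DecidableEq F]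

theorem quadraticChar_eq_of_add_sq_div_eq {t v y : F} (ht : t ≠ 0) (hy : t + v ^ 2 / t = y)
    (hyv : y + 2 * v ≠ 0) : quadraticChar F t = quadraticChar F (y + 2 * v) := by
  have hsq : (t + v) ^ 2 = t * (y + 2 * v) := by rw [← hy]; field_simp; ring
  have htv : t + v ≠ 0 := fun h => mul_ne_zero ht hyv (by rw [← hsq, h]; ring)
  have hmul : quadraticChar F t * quadraticChar F (y + 2 * v) = 1 := by
    rw [← map_mul, ← hsq, quadraticChar_sq_one' htv]
  calc quadraticChar F t = quadraticChar F t * quadraticChar F (y + 2 * v) ^ 2 := by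
        rw [quadraticChar_sq_one hyv, mul_one]
    _ = quadraticChar F (y + 2 * v) := by rw [sq, ← mul_assoc, hmul, one_mul]

variable (hF : ringChar F ≠ 2)
include hF

theorem card_filter_add_sq_div_eq {v : F} (hv : v ≠ 0) (y : F) :
    (#{t | t ≠ 0 ∧ t + v ^ 2 / t = y} : ℤ) = quadraticChar F (y ^ 2 - 4 * v ^ 2) + 1 := by
  have h2 : (2 : F) ≠ 0 := Ring.two_ne_zero hF
  rw [← quadraticChar_card_sqrts hF, Nat.cast_inj]
  refine card_nbij' (fun t => 2 * t - y) (fun x => (x + y) / 2) ?_ ?_ ?_ ?_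
  · intro t ht
    simp only [coe_filter, mem_univ, true_and, Set.mem_ofPred_eq, Set.coe_toFinset] at ht ⊢
    obtain ⟨ht0, rfl⟩ := ht
    field_simp
    ring
  · intro x hx
    simp only [coe_filter, mem_univ, true_and, Set.mem_ofPred_eq, Set.coe_toFinset] at hx ⊢
    have hxy : x + y ≠ 0 := by
      intro hxy
      rw [eq_neg_of_add_eq_zero_left hxy, neg_sq] at hx
      exact mul_ne_zero h2 hv (pow_eq_zero_iff two_ne_zero |>.1 (by linear_combination hx))
    refine ⟨div_ne_zero hxy h2, ?_⟩
    field_simp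
    linear_combination hx
  · intro t _
    field_simp
    ring
  · intro x _
    field_simp
    ring

theorem sum_quadraticChar_filter_add_sq_div_eq {v : F} (hv : v ≠ 0) (y : F) :
    ∑ t with t ≠ 0 ∧ t + v ^ 2 / t = y, quadraticChar F t =
      quadraticChar F (y + 2 * v) + quadraticChar F (y - 2 * v) := by
  wlog hyv : y + 2 * v ≠ 0 generalizing v
  · have hyv' : y - 2 * v ≠ 0 := by
      rw [show y - 2 * v = -(2 * 2) * v by linear_combination not_not.1 hyv]
      exact mul_ne_zero (neg_ne_zero.2 (mul_ne_zero (Ring.two_ne_zero hF) (Ring.two_ne_zero hF))) hv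
    have := this (neg_ne_zero.2 hv) (by rw [mul_neg, ← sub_eq_add_neg]; exact hyv')
    rwa [neg_sq, mul_neg, ← sub_eq_add_neg, sub_neg_eq_add, add_comm] at this
  rw [sum_congr rfl fun t ht => quadraticChar_eq_of_add_sq_div_eq (mem_filter.1 ht).2.1
      (mem_filter.1 ht).2.2 hyv, sum_const, nsmul_eq_mul, card_filter_add_sq_div_eq hF hv,
    show y ^ 2 - 4 * v ^ 2 = (y + 2 * v) * (y - 2 * v) by ring, map_mul]
  linear_combination quadraticChar F (y - 2 * v) * quadraticChar_sq_one hyv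

variable {R : Type*} [CommRing R]

local notation "η" => MulChar.ringHomComp (quadraticChar F) (Int.castRingHom R)

theorem salieSum_one_sq (ψ : AddChar F R) {v : F} (hv : v ≠ 0) :
    salieSum η ψ 1 (v ^ 2) = (ψ (2 * v) + ψ (-(2 * v))) * gaussSum η ψ := by
  have hfibre (y : F) : ∑ t with t ≠ 0 ∧ t + v ^ 2 / t = y, η t * ψ (1 * t + v ^ 2 / t) =
      (η (y + 2 * v) + η (y + -(2 * v))) * ψ y := by
    rw [sum_congr rfl fun t ht => by rw [one_mul, (mem_filter.1 ht).2.2], ← sum_mul]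
    simp only [MulChar.ringHomComp_apply, eq_intCast, ← Int.cast_sum, ← sub_eq_add_neg,
      sum_quadraticChar_filter_add_sq_div_eq hF hv, Int.cast_add]
  calc salieSum η ψ 1 (v ^ 2) = ∑ t with t ≠ 0, η t * ψ (1 * t + v ^ 2 / t) := by
        refine (sum_filter_of_ne fun t _ h => ?_).symm
        rintro rfl
        simp at h
    _ = ∑ y, ∑ t with t ≠ 0 ∧ t + v ^ 2 / t = y, η t * ψ (1 * t + v ^ 2 / t) := by
        rw [← sum_fiberwise _ fun t => t + v ^ 2 / t]
        simp only [filter_filter]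
    _ = ∑ y, (η (y + 2 * v) * ψ y + η (y + -(2 * v)) * ψ y) := by
        simp only [hfibre, add_mul]
    _ = (ψ (2 * v) + ψ (-(2 * v))) * gaussSum η ψ := by
        rw [sum_add_distrib, sum_mulChar_add_mul_addChar, sum_mulChar_add_mul_addChar, neg_neg,
          add_comm, add_mul]

end QuadraticChar

section Complex
variable {F : Type*} [Field F] [Fintype F] [DecidableEq F]

local notation "η" => MulChar.ringHomComp (quadraticChar F) (Int.castRingHom ℂ)

theorem norm_intCast_quadraticChar {a : F} (ha : a ≠ 0) :
    ‖((quadraticChar F a : ℤ) : ℂ)‖ = 1 := by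
  rcases quadraticChar_dichotomy ha with h | h <;> simp [h]

variable (hF : ringChar F ≠ 2)
include hF

theorem norm_gaussSum_quadraticChar {ψ : AddChar F ℂ} (hψ : ψ ≠ 1) :
    ‖gaussSum η ψ‖ = √(Fintype.card F) := by
  have hsq := gaussSum_sq
    ((MulChar.ringHomComp_ne_one_iff (f := Int.castRingHom ℂ) Int.cast_injective).2
      (quadraticChar_ne_one hF))
    ((quadraticChar_isQuadratic F).comp _) (AddChar.IsPrimitive.of_ne_one hψ)
  rw [← Real.sqrt_sq (norm_nonneg _), ← norm_pow, hsq, norm_mul, MulChar.ringHomComp_apply,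
    eq_intCast, norm_intCast_quadraticChar (neg_ne_zero.2 one_ne_zero), one_mul,
    Complex.norm_natCast]

theorem norm_salieSum_one_le (ψ : AddChar F ℂ) (c : F) :
    ‖salieSum η ψ 1 c‖ ≤ 2 * ‖gaussSum η ψ‖ := by
  rcases eq_or_ne c 0 with rfl | hc
  · rw [salieSum_one_zero]
    linarith [norm_nonneg (gaussSum η ψ)]
  by_cases hsq : IsSquare c
  · obtain ⟨v, rfl⟩ := hsq
    have hv : v ≠ 0 := by rintro rfl; simp at hc
    rw [← sq, salieSum_one_sq hF ψ hv, norm_mul]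
    gcongr
    calc ‖ψ (2 * v) + ψ (-(2 * v))‖ ≤ ‖ψ (2 * v)‖ + ‖ψ (-(2 * v))‖ := norm_add_le _ _
      _ = 2 := by rw [AddChar.norm_apply, AddChar.norm_apply]; norm_num
  · have hself := salieSum_one_eq_mul_self ψ
      ((quadraticChar_isQuadratic F).comp (Int.castRingHom ℂ)) hc
    rw [MulChar.ringHomComp_apply, quadraticChar_neg_one_iff_not_isSquare.2 hsq, eq_intCast,
      Int.cast_neg, Int.cast_one, neg_one_mul, self_eq_neg] at hself
    rw [hself, norm_zero]
    positivity

theorem norm_salieSum_le {ψ : AddChar F ℂ} (hψ : ψ ≠ 1) {a b : F} (hab : a ≠ 0 ∨ b ≠ 0) :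
    ‖salieSum η ψ a b‖ ≤ 2 * √(Fintype.card F) := by
  wlog ha : a ≠ 0 generalizing a b
  · rw [salieSum_comm ψ ((quadraticChar_isQuadratic F).comp _)]
    exact this hab.symm (hab.resolve_left ha)
  rw [salieSum_eq_mul_salieSum_one _ ψ ha, norm_mul, MulChar.ringHomComp_apply, eq_intCast,
    norm_intCast_quadraticChar (inv_ne_zero ha), one_mul, ← norm_gaussSum_quadraticChar hF hψ]
  exact norm_salieSum_one_le hF ψ (a * b)

end Complex

section CanonicalChar
variable (p : ℕ) [Fact p.Prime] (F : Type*) [Field F] [Fintype F] [Algebra (ZMod p) F]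

noncomputable def canonicalAddChar : AddChar F ℂ :=
  ZMod.stdAddChar.compAddMonoidHom (Algebra.trace (ZMod p) F).toAddMonoidHom

variable {F}

theorem canonicalAddChar_apply (x : F) : canonicalAddChar p F x = canonicalChar p F x := by
  rw [canonicalChar, ← Int.cast_natCast (R := ℂ), ← ZMod.stdAddChar_coe, Int.cast_natCast,
    ZMod.natCast_zmod_val]
  rfl

theorem canonicalAddChar_ne_one : canonicalAddChar p F ≠ 1 := by
  obtain ⟨x, hx⟩ := DFunLike.ne_iff.1 (Algebra.trace_ne_zero (ZMod p) F)
  refine AddChar.ne_one_iff.2 ⟨x, fun h => hx ?_⟩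
  rw [← (ZMod.stdAddChar (N := p)).map_zero_eq_one] at h
  exact ZMod.injective_stdAddChar h

theorem quadChar_eq_quadraticChar [DecidableEq F] (a : F) : quadChar F a = quadraticChar F a := by
  rw [quadChar, quadraticChar_apply, quadraticCharFun]
  split_ifs <;> simp_all

open scoped Classical in
theorem sum_canonicalChar_mul_quadChar_eq_salieSum (a b : F) :
    ∑ s ∈ univ.filter (fun s : F => s ≠ 0), canonicalChar p F (a * s + b / s) * quadChar F s =
      salieSum ((quadraticChar F).ringHomComp (Int.castRingHom ℂ)) (canonicalAddChar p F) a b := by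
  rw [salieSum, sum_filter_of_ne fun s _ h => ?_]
  · simp only [canonicalAddChar_apply, quadChar_eq_quadraticChar, mul_comm,
      MulChar.ringHomComp_apply, eq_intCast]
  · rintro rfl
    simp [quadChar] at h

end CanonicalChar

open scoped Classical in
theorem salie_sum_bound
    (p : ℕ) [Fact p.Prime] (F : Type*) [Field F] [Fintype F] [Algebra (ZMod p) F]
    (hq : Odd (Fintype.card F)) (a b : F) (hab : ¬(a = 0 ∧ b = 0)) :
    ‖(∑ s ∈ Finset.univ.filter (fun s : F => s ≠ 0),
        canonicalChar p F (a * s + b / s) * quadChar F s)‖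
      ≤ 2 * Real.sqrt (Fintype.card F) := by
  have hF : ringChar F ≠ 2 := by
    rwa [Ne, FiniteField.even_card_iff_char_two, ← Nat.even_iff, Nat.not_even_iff_odd]
  rw [sum_canonicalChar_mul_quadChar_eq_salieSum]
  exact norm_salieSum_le hF (canonicalAddChar_ne_one p) (not_and_or.1 hab)
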